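/- arXiv:2303.08612 — 2 statements merged into one kernel-verified Lean document; each statement's English description precedes it below -/
import Mathlib

section
/- Define γ_d = sup{ K/α : there exists a (d,K,α) prefix covering design }. If for every d ≥ 3 and multiple v of d there exists a (v,k,2) covering design with d blocks admitting a multi-matching, then γ_d ≥ d/(3 − 2v/(kd)). (In particular, the existence of the replicated prefix covering designs with parameters K=(nk+v')d and α ≤ 3nk−(2n−3)v' for all n implies that the supremum γ_d is at least the limit d/(3 − 2v'/k) as n → ∞.) -/
open scoped BigOperators

/-- `x` occurs at 1-indexed level `ℓ` in some sequence of `s`. -/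
def OccursAt {d K : ℕ} (s : Fin d → List (Fin K)) (x : Fin K) (ℓ : ℕ) : Prop :=
  1 ≤ ℓ ∧ ∃ i : Fin d, (s i)[ℓ - 1]? = some x

/-- `ℓ_min(x)`: the minimal 1-indexed level at which `x` occurs in any sequence. -/
noncomputable def lMin {d K : ℕ} (s : Fin d → List (Fin K)) (x : Fin K) : ℕ :=
  sInf {ℓ | OccursAt s x ℓ}

/-- `ℓ_max(x)`: the maximal 1-indexed level at which `x` occurs in any sequence. -/
noncomputable def lMax {d K : ℕ} (s : Fin d → List (Fin K)) (x : Fin K) : ℕ :=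
  sSup {ℓ | OccursAt s x ℓ}

/-- Total number of occurrences of `x` among the sequences. -/
def totalCount {d K : ℕ} (s : Fin d → List (Fin K)) (x : Fin K) : ℕ :=
  ∑ i : Fin d, (s i).count x

/-- Triplet condition: every 3-element subset of `[K]` is covered by at most three
prefixes of total length at most `α`. -/
def TripletCond (d K α : ℕ) (s : Fin d → List (Fin K)) : Prop :=
  ∀ a b c : Fin K, a ≠ b → a ≠ c → b ≠ c →
    ∃ (i i' i'' : Fin d) (ℓ ℓ' ℓ'' : ℕ), ℓ + ℓ' + ℓ'' ≤ α ∧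
      ∀ x : Fin K, (x = a ∨ x = b ∨ x = c) →
        x ∈ (s i).take ℓ ∨ x ∈ (s i').take ℓ' ∨ x ∈ (s i'').take ℓ''

/-- Singleton condition: `ℓ_min(x) + ℓ_max(x) ≤ α + 1` for every repeated element `x`. -/
def SingletonCond (d K α : ℕ) (s : Fin d → List (Fin K)) : Prop :=
  ∀ x : Fin K, 2 ≤ totalCount s x → lMin s x + lMax s x ≤ α + 1

/-- A `(d, K, α)` prefix covering design. -/
def IsPCD (d K α : ℕ) (s : Fin d → List (Fin K)) : Prop :=
  TripletCond d K α s ∧ SingletonCond d K α s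

/-- A convenient embedding of a doubly-indexed element into `Fin N`. -/
def pcdElem (off a b N : ℕ) (h : off + a * b ≤ N) (i : Fin a) (t : Fin b) : Fin N :=
  ⟨off + (i.1 * b + t.1), by
    have hi := i.isLt
    have ht := t.isLt
    have h2 : i.1 * b + t.1 < a * b := by
      calc i.1 * b + t.1 < i.1 * b + b := by omega
        _ = (i.1 + 1) * b := (Nat.succ_mul _ _).symm
        _ ≤ a * b := Nat.mul_le_mul_right _ hi
    omega⟩

/-- A `(v, k, 2)` covering design with `d` blocks. -/
def IsCoveringDesign (v k d : ℕ) (B : Fin d → Finset (Fin v)) : Prop :=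
  (∀ i, (B i).card = k) ∧ ∀ x y : Fin v, x ≠ y → ∃ i, x ∈ B i ∧ y ∈ B i

/-- The set of qualities `K/α` of `(d, K, α)` prefix covering designs; `γ_d` is its supremum. -/
def gammaSet (d : ℕ) : Set ℝ :=
  {q | ∃ (K α : ℕ) (s : Fin d → List (Fin K)),
    4 ≤ K ∧ 0 < α ∧ IsPCD d K α s ∧ q = (K : ℝ) / (α : ℝ)}

/-! Fix `N` and replicate the covering design `N` times: the ground set consists of copies `(r, x)`
of its points at levels `r < N`, plus `q` private points per sequence. Sequence `i` lists its
private points, then the cheap blocks `CB i` at levels `0, …, N - 1`, then the deep blocks `DB i`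
at levels `N - 1, …, 0`, where `CB i ∪ DB i = B i` and every point lies in some cheap block.
A triple of copies is covered by the cheap prefix reaching its lowest member plus one deep prefix
reaching the other two (the blocks `B j` cover every pair). Raising the lowest level lengthens the
first prefix by `|CB|` per level and shortens the second by `|DB| ≥ |CB|`, so the budget
`α = 2q + N|CB| + N|DB| + |CB|` suffices; it also bounds first plus last occurrence of a copy, and
leaves room for private points as long as `q ≤ N|DB| + |CB|`. If `2v' ≤ k`, the choice `CB = U`,
`DB = B \ U`, `q = N(k - v')` has quality `K/α → dk/(3k - 2v')`; otherwise `CB = B \ U`, `DB = U`,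
`q = 0` has quality tending to `v/k`, which is at least as large. -/

open Filter Topology

namespace List

variable {β γ : Type*} {g : β → List γ} {c : ℕ}

theorem mem_take_flatMap_of_length_eq (hg : ∀ b, (g b).length = c) {L : List β} {m : ℕ}
    (hm : m < L.length) {y : γ} (hy : y ∈ g L[m]) : y ∈ (L.flatMap g).take ((m + 1) * c) := by
  induction L generalizing m with
  | nil => simp at hm
  | cons b L ih =>
    rw [flatMap_cons]
    cases m with
    | zero =>
      rw [zero_add, one_mul, take_append_of_le_length (hg b).ge, take_of_length_le (hg b).le]
      exact hy
    | succ m =>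
      rw [show (m + 1 + 1) * c = (g b).length + (m + 1) * c by rw [hg]; ring,
        take_length_add_append]
      exact mem_append_right _ (ih (by simpa using hm) hy)

theorem exists_mem_drop_of_mem_drop_flatMap (hg : ∀ b, (g b).length = c) {L : List β} {m : ℕ}
    {y : γ} (hy : y ∈ (L.flatMap g).drop (m * c)) : ∃ b ∈ L.drop m, y ∈ g b := by
  induction L generalizing m with
  | nil => simp at hy
  | cons b L ih =>
    cases m with
    | zero => simpa using hy
    | succ m =>
      rw [flatMap_cons, show (m + 1) * c = (g b).length + m * c by rw [hg]; ring,
        drop_length_add_append] at hy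
      simpa using ih hy

end List

section PrefixCovers

variable {β γ : Type*} {d : ℕ}

/-- `T` is covered by three prefixes of total length at most `n` (the clause of `TripletCond`). -/
def PrefixCoverable (s : Fin d → List β) (n : ℕ) (T : Set β) : Prop :=
  ∃ (i i' i'' : Fin d) (ℓ ℓ' ℓ'' : ℕ), ℓ + ℓ' + ℓ'' ≤ n ∧
    ∀ x ∈ T, x ∈ (s i).take ℓ ∨ x ∈ (s i').take ℓ' ∨ x ∈ (s i'').take ℓ''

theorem PrefixCoverable.mono {s : Fin d → List β} {n n' : ℕ} {T T' : Set β}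
    (h : PrefixCoverable s n T) (hn : n ≤ n') (hT : T' ⊆ T) : PrefixCoverable s n' T' := by
  obtain ⟨i, i', i'', ℓ, ℓ', ℓ'', hℓ, hcov⟩ := h
  exact ⟨i, i', i'', ℓ, ℓ', ℓ'', hℓ.trans hn, fun x hx => hcov x (hT hx)⟩

theorem PrefixCoverable.image {s : Fin d → List β} {n : ℕ} {T : Set β}
    (h : PrefixCoverable s n T) (f : β → γ) :
    PrefixCoverable (fun i => (s i).map f) n (f '' T) := by
  obtain ⟨i, i', i'', ℓ, ℓ', ℓ'', hℓ, hcov⟩ := h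
  refine ⟨i, i', i'', ℓ, ℓ', ℓ'', hℓ, ?_⟩
  rintro _ ⟨x, hx, rfl⟩
  have hf {j : Fin d} {ℓ : ℕ} (h : x ∈ (s j).take ℓ) : f x ∈ ((s j).map f).take ℓ :=
    List.map_take ▸ List.mem_map_of_mem h
  exact (hcov x hx).imp hf (Or.imp hf hf)

theorem prefixCoverable_insert {s : Fin d → List β} {n : ℕ} {T : Set β} {a : β} {i i' i'' : Fin d}
    {ℓ ℓ' ℓ'' : ℕ} (ha : a ∈ (s i).take ℓ)
    (hT : ∀ x ∈ T, x ∈ (s i').take ℓ' ∨ x ∈ (s i'').take ℓ'') (hn : ℓ + ℓ' + ℓ'' ≤ n) :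
    PrefixCoverable s n (insert a T) := by
  refine ⟨i, i', i'', ℓ, ℓ', ℓ'', hn, ?_⟩
  rintro x (rfl | hx)
  · exact Or.inl ha
  · exact Or.inr (hT x hx)

variable {K : ℕ}

theorem lMin_le_of_mem_take {s : Fin d → List (Fin K)} {x : Fin K} {j : Fin d} {t : ℕ}
    (h : x ∈ (s j).take t) : lMin s x ≤ t := by
  obtain ⟨m, hm⟩ := List.mem_iff_getElem?.1 h
  rw [List.getElem?_take] at hm
  split_ifs at hm with hmt
  exact (Nat.sInf_le (⟨by omega, j, hm⟩ : OccursAt s x (m + 1))).trans hmt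

theorem lMax_le_of_forall_notMem_drop {s : Fin d → List (Fin K)} {x : Fin K} {b : ℕ}
    (h : ∀ j, x ∉ (s j).drop b) : lMax s x ≤ b := by
  refine csSup_le' fun ℓ ⟨hℓ, j, hj⟩ => ?_
  by_contra! hbℓ
  apply h j
  rw [List.mem_iff_getElem?]
  exact ⟨ℓ - 1 - b, by rw [List.getElem?_drop, ← hj]; congr 1; omega⟩

theorem isPCD_map_equiv (e : β ≃ Fin K) (s : Fin d → List β) (α : ℕ)
    (htriplet : ∀ a b c : β, PrefixCoverable s α {a, b, c})
    (hsingleton : ∀ p : β, ∃ (j : Fin d) (t b : ℕ),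
      p ∈ (s j).take t ∧ (∀ j, p ∉ (s j).drop b) ∧ t + b ≤ α + 1) :
    IsPCD d K α (fun i => (s i).map e) := by
  constructor
  · intro a b c _ _ _
    have h := (htriplet (e.symm a) (e.symm b) (e.symm c)).image e
    simp only [Set.image_insert_eq, Set.image_singleton, Equiv.apply_symm_apply] at h
    exact h
  · intro x _
    obtain ⟨j, t, b, hmem, hdrop, htb⟩ := hsingleton (e.symm x)
    have hmin : lMin (fun i => (s i).map e) x ≤ t := by
      refine lMin_le_of_mem_take (j := j) ?_
      rw [← List.map_take]
      simpa using List.mem_map_of_mem (f := e) hmem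
    have hmax : lMax (fun i => (s i).map e) x ≤ b := by
      refine lMax_le_of_forall_notMem_drop fun j' hx => hdrop j' ?_
      rw [← List.map_drop] at hx
      simpa using (List.mem_map_of_injective e.injective).1 (by simpa using hx)
    omega

end PrefixCovers

theorem mul_add_sub_mul_le_mul {r N c e : ℕ} (hr : r ≤ N) (hce : c ≤ e) :
    r * c + (N - r) * e ≤ N * e := by
  obtain ⟨m, rfl⟩ := Nat.exists_eq_add_of_le hr
  rw [Nat.add_sub_cancel_left, add_mul]
  exact Nat.add_le_add_right (Nat.mul_le_mul_left r hce) _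

namespace ReplicatedDesign

/-- `inl (r, x)` is the copy of the design point `x` at level `r`; `inr (i, t)` is the `t`-th
private point of sequence `i`. -/
abbrev Point (N v d q : ℕ) : Type := (Fin N × Fin v) ⊕ (Fin d × Fin q)

def pointEquiv (N v d q : ℕ) : Point N v d q ≃ Fin (N * v + d * q) :=
  (Equiv.sumCongr finProdFinEquiv finProdFinEquiv).trans finSumFinEquiv

/-- In a triple, the point of least rank is the one covered by a prefix of its own. -/
def rank {N v d q : ℕ} : Point N v d q → ℕ
  | .inl (r, _) => r + 1
  | .inr _ => 0

variable (N q : ℕ) {v d : ℕ} (CB DB : Fin d → Finset (Fin v))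

def privatePart (i : Fin d) : List (Point N v d q) :=
  (List.finRange q).map fun t => .inr (i, t)

noncomputable def cheapPart (i : Fin d) : List (Point N v d q) :=
  (List.finRange N).flatMap fun r => (CB i).toList.map fun x => .inl (r, x)

noncomputable def deepPart (i : Fin d) : List (Point N v d q) :=
  (List.finRange N).flatMap fun r => (DB i).toList.map fun x => .inl (r.rev, x)

noncomputable def seq (i : Fin d) : List (Point N v d q) :=
  privatePart N q i ++ (cheapPart N q CB i ++ deepPart N q DB i)

variable {N q CB DB}

theorem take_seq (j : Fin d) (n : ℕ) :
    (seq N q CB DB j).take (q + n) =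
      privatePart N q j ++ (cheapPart N q CB j ++ deepPart N q DB j).take n := by
  have h := List.take_length_add_append (l₁ := privatePart N q j)
    (l₂ := cheapPart N q CB j ++ deepPart N q DB j) n
  rwa [show (privatePart N q j : List (Point N v d q)).length = q by simp [privatePart]] at h

theorem drop_seq (j : Fin d) (n : ℕ) :
    (seq N q CB DB j).drop (q + n) = (cheapPart N q CB j ++ deepPart N q DB j).drop n := by
  have h := List.drop_length_add_append (l₁ := privatePart N q j)
    (l₂ := cheapPart N q CB j ++ deepPart N q DB j) n
  rwa [show (privatePart N q j : List (Point N v d q)).length = q by simp [privatePart]] at h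

theorem inr_mem_take_seq (j : Fin d) (t : Fin q) :
    .inr (j, t) ∈ (seq N q CB DB j).take q := by
  have h := take_seq (N := N) (q := q) (CB := CB) (DB := DB) j 0
  rw [add_zero] at h
  rw [h]
  exact List.mem_append_left _ (by simp [privatePart])

theorem inr_notMem_drop_seq (j : Fin d) (p : Fin d × Fin q) :
    .inr p ∉ (seq N q CB DB j).drop q := by
  have h := drop_seq (N := N) (q := q) (CB := CB) (DB := DB) j 0
  rw [add_zero] at h
  rw [h]
  simp [cheapPart, deepPart]

variable {c e : ℕ} (hcb : ∀ i, (CB i).card = c) (hdb : ∀ i, (DB i).card = e)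
include hcb

theorem length_cheapPart (i : Fin d) : (cheapPart N q CB i).length = N * c := by
  simp [cheapPart, List.length_flatMap, hcb]

theorem inl_mem_take_seq_of_mem_cheap {x : Fin v} {j : Fin d} (hx : x ∈ CB j) (r : Fin N) :
    .inl (r, x) ∈ (seq N q CB DB j).take (q + (r + 1) * c) := by
  rw [take_seq, List.take_append_of_le_length (by rw [length_cheapPart hcb]; gcongr; exact r.isLt)]
  refine List.mem_append_right _ (List.mem_take_flatMap_of_length_eq (by simp [hcb])
    (by simp) ?_)
  simpa using hx

include hdb

theorem inl_mem_take_seq_of_mem_deep {x : Fin v} {j : Fin d} (hx : x ∈ DB j) (r : Fin N) :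
    .inl (r, x) ∈ (seq N q CB DB j).take (q + (N * c + (N - r) * e)) := by
  rw [take_seq, ← length_cheapPart hcb j, List.take_length_add_append]
  refine List.mem_append_right _ (List.mem_append_right _ ?_)
  have hlen : (N - r) * e = (r.rev + 1) * e := by rw [Fin.val_rev]; congr 1; omega
  rw [hlen]
  refine List.mem_take_flatMap_of_length_eq (by simp [hdb]) (by simpa using r.rev.isLt) ?_
  simpa [← Fin.val_rev] using hx

theorem inl_notMem_drop_seq {j : Fin d} (r : Fin N) (x : Fin v) :
    .inl (r, x) ∉ (seq N q CB DB j).drop (q + (N * c + (N - r) * e)) := by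
  rw [drop_seq, ← length_cheapPart hcb j, List.drop_length_add_append]
  intro hmem
  obtain ⟨b, hb, hxb⟩ := List.exists_mem_drop_of_mem_drop_flatMap (by simp [hdb]) hmem
  obtain ⟨m, hm, rfl⟩ := List.mem_drop_iff_getElem.1 hb
  simp only [List.mem_map, Finset.mem_toList, Sum.inl.injEq, Prod.mk.injEq] at hxb
  obtain ⟨_, _, hr, -⟩ := hxb
  have := congrArg Fin.val hr
  simp [Fin.val_rev] at this hm
  omega

theorem inl_mem_take_seq_of_mem_union {x : Fin v} {j : Fin d} (hx : x ∈ CB j ∪ DB j) (r : Fin N) :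
    .inl (r, x) ∈ (seq N q CB DB j).take (q + (N * c + (N - r) * e)) := by
  rcases Finset.mem_union.1 hx with hx | hx
  · refine List.take_subset_take_left _ ?_ (inl_mem_take_seq_of_mem_cheap hcb hx r)
    have : (r + 1) * c ≤ N * c := Nat.mul_le_mul_right c r.isLt
    omega
  · exact inl_mem_take_seq_of_mem_deep hcb hdb hx r

variable (hcheap : ∀ x, ∃ j, x ∈ CB j)
  (hpair : ∀ x y, x ≠ y → ∃ j, x ∈ CB j ∪ DB j ∧ y ∈ CB j ∪ DB j)
include hcheap hpair

theorem exists_inl_mem_take_seq_pair {r : ℕ} {r₁ r₂ : Fin N} (h₁ : r ≤ r₁) (h₂ : r ≤ r₂)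
    (x₁ x₂ : Fin v) : ∃ j,
      .inl (r₁, x₁) ∈ (seq N q CB DB j).take (q + (N * c + (N - r) * e)) ∧
      .inl (r₂, x₂) ∈ (seq N q CB DB j).take (q + (N * c + (N - r) * e)) := by
  obtain ⟨j, hx₁, hx₂⟩ : ∃ j, x₁ ∈ CB j ∪ DB j ∧ x₂ ∈ CB j ∪ DB j := by
    by_cases hx : x₁ = x₂
    · obtain ⟨j, hj⟩ := hcheap x₁
      exact ⟨j, Finset.mem_union_left _ hj, hx ▸ Finset.mem_union_left _ hj⟩
    · exact hpair x₁ x₂ hx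
  have hmono {r' : Fin N} (h : r ≤ r') :
      q + (N * c + (N - r') * e) ≤ q + (N * c + (N - r) * e) := by
    have : (N - r') * e ≤ (N - r) * e := Nat.mul_le_mul_right e (by omega)
    omega
  exact ⟨j, List.take_subset_take_left _ (hmono h₁) (inl_mem_take_seq_of_mem_union hcb hdb hx₁ r₁),
    List.take_subset_take_left _ (hmono h₂) (inl_mem_take_seq_of_mem_union hcb hdb hx₂ r₂)⟩

variable (hq : q ≤ N * e + c)
include hq

theorem exists_two_prefix_cover (p₁ p₂ : Point N v d q) : ∃ (j j' : Fin d) (ℓ ℓ' : ℕ),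
    ℓ + ℓ' ≤ q + N * c + N * e + c ∧
      ∀ p ∈ ({p₁, p₂} : Set (Point N v d q)),
        p ∈ (seq N q CB DB j).take ℓ ∨ p ∈ (seq N q CB DB j').take ℓ' := by
  have hcrude (p : Point N v d q) : ∃ j, p ∈ (seq N q CB DB j).take (q + N * c) := by
    rcases p with ⟨r, x⟩ | ⟨i, t⟩
    · obtain ⟨j, hj⟩ := hcheap x
      refine ⟨j, List.take_subset_take_left _ ?_ (inl_mem_take_seq_of_mem_cheap hcb hj r)⟩
      exact Nat.add_le_add_left (Nat.mul_le_mul_right c r.isLt) q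
    · exact ⟨i, List.take_subset_take_left _ (by omega) (inr_mem_take_seq i t)⟩
  rcases p₁ with ⟨r₁, x₁⟩ | ⟨i, t⟩
  · rcases p₂ with ⟨r₂, x₂⟩ | ⟨i, t⟩
    · obtain ⟨j, h₁, h₂⟩ := exists_inl_mem_take_seq_pair hcb hdb hcheap hpair
        (Nat.zero_le r₁) (Nat.zero_le r₂) x₁ x₂
      rw [Nat.sub_zero] at h₁ h₂
      refine ⟨j, j, q + (N * c + N * e), 0, by omega, ?_⟩
      rintro p (rfl | rfl)
      exacts [Or.inl h₁, Or.inl h₂]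
    · obtain ⟨j, hj⟩ := hcrude (.inl (r₁, x₁))
      refine ⟨j, i, q + N * c, q, by omega, ?_⟩
      rintro p (rfl | rfl)
      exacts [Or.inl hj, Or.inr (inr_mem_take_seq i t)]
  · obtain ⟨j, hj⟩ := hcrude p₂
    refine ⟨i, j, q, q + N * c, by omega, ?_⟩
    rintro p (rfl | rfl)
    exacts [Or.inl (inr_mem_take_seq i t), Or.inr hj]

variable (hce : c ≤ e)
include hce

theorem prefixCoverable_of_rank_le {a b b' : Point N v d q} (hb : rank a ≤ rank b)
    (hb' : rank a ≤ rank b') :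
    PrefixCoverable (seq N q CB DB) (2 * q + N * c + N * e + c) {a, b, b'} := by
  rcases a with ⟨r, x⟩ | ⟨i, t⟩
  · rcases b with ⟨rb, y⟩ | _ <;> rcases b' with ⟨rb', y'⟩ | _ <;>
      simp only [rank, add_le_add_iff_right, Fin.val_fin_le, nonpos_iff_eq_zero,
        Nat.add_one_ne_zero] at hb hb'
    obtain ⟨j, hj⟩ := hcheap x
    obtain ⟨j', h, h'⟩ := exists_inl_mem_take_seq_pair hcb hdb hcheap hpair
      (r := r) hb hb' y y'
    refine prefixCoverable_insert (i'' := j') (ℓ'' := 0) (inl_mem_take_seq_of_mem_cheap hcb hj r)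
      (by rintro p (rfl | rfl); exacts [Or.inl h, Or.inl h']) ?_
    have := mul_add_sub_mul_le_mul (Nat.le_of_lt r.isLt) hce
    rw [add_mul, one_mul]
    omega
  · obtain ⟨j, j', ℓ, ℓ', hℓ, hcov⟩ := exists_two_prefix_cover hcb hdb hcheap hpair hq b b'
    exact prefixCoverable_insert (inr_mem_take_seq i t) hcov (by omega)

theorem isPCD_map_seq :
    IsPCD d (N * v + d * q) (2 * q + N * c + N * e + c)
      (fun i => (seq N q CB DB i).map (pointEquiv N v d q)) := by
  have key {a b b' : Point N v d q} :=
    prefixCoverable_of_rank_le hcb hdb hcheap hpair hq hce (a := a) (b := b) (b' := b')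
  have hperm {a b b' : Point N v d q} :
      ({a, b, b'} : Set _) ⊆ {b', a, b} ∧ ({a, b, b'} : Set _) ⊆ {b, a, b'} := by
    constructor <;> intro x <;> simp only [Set.mem_insert_iff, Set.mem_singleton_iff] <;> tauto
  refine isPCD_map_equiv _ _ _ (fun a b b' => ?_) fun p => ?_
  · obtain h | h | h : (rank a ≤ rank b ∧ rank a ≤ rank b') ∨
        (rank b ≤ rank a ∧ rank b ≤ rank b') ∨ (rank b' ≤ rank a ∧ rank b' ≤ rank b) := by omega
    · exact key h.1 h.2
    · exact (key h.1 h.2).mono le_rfl hperm.2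
    · exact (key h.1 h.2).mono le_rfl hperm.1
  · rcases p with ⟨r, x⟩ | ⟨i, t⟩
    · obtain ⟨j, hj⟩ := hcheap x
      refine ⟨j, _, _, inl_mem_take_seq_of_mem_cheap hcb hj r,
        fun j' => inl_notMem_drop_seq hcb hdb r x, ?_⟩
      have := mul_add_sub_mul_le_mul (Nat.le_of_lt r.isLt) hce
      rw [add_mul, one_mul]
      omega
    · exact ⟨i, q, q, inr_mem_take_seq i t, fun j => inr_notMem_drop_seq j (i, t), by omega⟩

theorem mem_gammaSet (hN : 4 ≤ N) (hv : 0 < v) (he : 0 < e) :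
    ((N * v + d * q : ℕ) : ℝ) / ((2 * q + N * c + N * e + c : ℕ) : ℝ) ∈ gammaSet d :=
  ⟨_, _, _, by nlinarith, by positivity, isPCD_map_seq hcb hdb hcheap hpair hq hce, rfl⟩

end ReplicatedDesign

theorem tendsto_mul_div_mul_add (a b c : ℝ) (hb : b ≠ 0) :
    Tendsto (fun N : ℕ => a * N / (b * N + c)) atTop (𝓝 (a / b)) := by
  have h := (tendsto_natCast_div_add_atTop (c / b)).const_mul (a / b)
  rw [mul_one] at h
  refine h.congr fun N => ?_
  rw [div_mul_div_comm, mul_add, mul_div_cancel₀ c hb]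

theorem exists_mem_sub_lt_of_tendsto {S : Set ℝ} {f : ℕ → ℝ} {L ε : ℝ}
    (hS : ∀ᶠ N in atTop, f N ∈ S) (hf : Tendsto f atTop (𝓝 L)) (hε : 0 < ε) :
    ∃ r ∈ S, L - ε < r := by
  obtain ⟨N, hN, hlt⟩ := (hS.and (hf.eventually (lt_mem_nhds (by linarith : L - ε < L)))).exists
  exact ⟨f N, hN, hlt⟩

section MultiMatching

variable {d v v' w : ℕ} {B U : Fin d → Finset (Fin v)}
  (hcard : ∀ i, (B i).card = v' + w) (hcover : ∀ x y : Fin v, x ≠ y → ∃ i, x ∈ B i ∧ y ∈ B i)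
  (hU : ∀ i, U i ⊆ B i) (hUcard : ∀ i, (U i).card = v') (hpart : ∀ x : Fin v, ∃! i, x ∈ U i)

include hcover hU in
theorem exists_mem_union_sdiff {x y : Fin v} (hxy : x ≠ y) :
    ∃ j, x ∈ U j ∪ (B j \ U j) ∧ y ∈ U j ∪ (B j \ U j) := by
  obtain ⟨j, hx, hy⟩ := hcover x y hxy
  rw [← Finset.union_sdiff_of_subset (hU j)] at hx hy
  exact ⟨j, hx, hy⟩

include hcard hU hUcard in
theorem card_sdiff_eq (i : Fin d) : (B i \ U i).card = w := by
  rw [Finset.card_sdiff_of_subset (hU i), hcard, hUcard, Nat.add_sub_cancel_left]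

include hcover hU hpart in
theorem exists_mem_sdiff_of_card_lt (hB : ∀ i, (B i).card < v) (x : Fin v) :
    ∃ j, x ∈ B j \ U j := by
  obtain ⟨i, hi, huniq⟩ := hpart x
  obtain ⟨y, hy⟩ : ∃ y, y ∉ B i := by
    by_contra! h
    exact (hB i).ne (by rw [Finset.eq_univ_of_forall h, Finset.card_univ, Fintype.card_fin])
  obtain ⟨j, hxj, hyj⟩ := hcover x y (fun hxy => hy (hxy ▸ hU i hi))
  exact ⟨j, Finset.mem_sdiff.2 ⟨hxj, fun hxU => hy (huniq j hxU ▸ hyj)⟩⟩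

include hcard hcover hU hUcard hpart

theorem exists_mem_gammaSet_gt_of_le (hv : v = v' * d) (hkv : v' + w ≤ v) (hvw : v' ≤ w)
    (hw : 0 < w) {ε : ℝ} (hε : 0 < ε) :
    ∃ r ∈ gammaSet d, d * (v' + w) / (3 * w + v') - ε < r := by
  subst hv
  refine exists_mem_sub_lt_of_tendsto ?_
    (tendsto_mul_div_mul_add _ _ v' (by norm_cast; omega)) hε
  filter_upwards [eventually_ge_atTop 4] with N hN
  convert ReplicatedDesign.mem_gammaSet (q := N * w) hUcard (card_sdiff_eq hcard hU hUcard)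
    (fun x => (hpart x).exists) (fun _ _ => exists_mem_union_sdiff hcover hU)
    (Nat.le_add_right _ _) hvw hN (by omega) hw using 1
  push_cast
  ring

theorem exists_mem_gammaSet_gt_of_lt (hkv : v' + w < v) (hvw : w < v') {ε : ℝ} (hε : 0 < ε) :
    ∃ r ∈ gammaSet d, v / (v' + w) - ε < r := by
  refine exists_mem_sub_lt_of_tendsto ?_
    (tendsto_mul_div_mul_add _ _ w (by norm_cast; omega)) hε
  filter_upwards [eventually_ge_atTop 4] with N hN
  convert ReplicatedDesign.mem_gammaSet (q := 0) (card_sdiff_eq hcard hU hUcard) hUcard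
    (exists_mem_sdiff_of_card_lt hcover hU hpart fun i => hcard i ▸ hkv)
    (fun _ _ hxy => by simpa only [Finset.union_comm] using exists_mem_union_sdiff hcover hU hxy)
    (Nat.zero_le _) hvw.le hN (by omega) (by omega) using 1
  push_cast
  ring

end MultiMatching

theorem stmt_7 (d k v v' : ℕ) (hd : 3 ≤ d) (hk : 0 < k) (hv : v = v' * d)
    (B : Fin d → Finset (Fin v))
    (hcard : ∀ i, (B i).card = k)
    (hcover : ∀ x y : Fin v, x ≠ y → ∃ i, x ∈ B i ∧ y ∈ B i)
    (U : Fin d → Finset (Fin v))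
    (hU : ∀ i, U i ⊆ B i)
    (hUcard : ∀ i, (U i).card = v')
    (hpart : ∀ x : Fin v, ∃! i : Fin d, x ∈ U i) :
    ∀ ε : ℝ, 0 < ε →
      ∃ r ∈ gammaSet d, (d : ℝ) / (3 - 2 * (v : ℝ) / ((k : ℝ) * (d : ℝ))) - ε < r := by
  intro ε hε
  have i₀ : Fin d := ⟨0, by omega⟩
  obtain ⟨w, rfl⟩ : ∃ w, k = v' + w :=
    Nat.exists_eq_add_of_le (hUcard i₀ ▸ hcard i₀ ▸ Finset.card_le_card (hU i₀))
  have hkv : v' + w ≤ v := by simpa [hcard] using Finset.card_le_univ (B i₀)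
  have hpos : (0 : ℝ) < 3 * w + v' := by norm_cast; omega
  have htarget : (d : ℝ) / (3 - 2 * (v : ℝ) / (((v' + w : ℕ) : ℝ) * d))
      = d * (v' + w) / (3 * w + v') := by
    have : (d : ℝ) ≠ 0 := by norm_cast; omega
    have : (v' : ℝ) + w ≠ 0 := by norm_cast; omega
    rw [hv]
    push_cast
    rw [show (3 : ℝ) - 2 * (v' * d) / ((v' + w) * d) = (3 * w + v') / (v' + w) by
      field_simp; ring, div_div_eq_mul_div]
  rw [htarget]
  rcases le_or_gt v' w with hvw | hvw
  · exact exists_mem_gammaSet_gt_of_le hcard hcover hU hUcard hpart hv hkv hvw (by omega) hε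
  · have hkv : v' + w < v := by nlinarith
    obtain ⟨r, hr, hlt⟩ := exists_mem_gammaSet_gt_of_lt hcard hcover hU hUcard hpart hkv hvw hε
    refine ⟨r, hr, lt_of_le_of_lt (sub_le_sub_right ?_ ε) hlt⟩
    rw [div_le_div_iff₀ hpos (by exact_mod_cast hk), hv]
    push_cast
    nlinarith [mul_le_mul_of_nonneg_left (Nat.cast_le.2 hvw.le : (w : ℝ) ≤ v')
      (mul_nonneg (Nat.cast_nonneg d : (0 : ℝ) ≤ d) (Nat.cast_nonneg w))]
end

section
/- Upper bound on prefix covering design quality: for every d ≥ 3, γ_d ≤ d / (3(1 − √(2/d))). In particular γ_d = d/3 + √(2/9)·√d + o(√d). -/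
open scoped BigOperators

/-!
Put `T = ⌊α / 3⌋`. Elements first appearing at level at most `T` occupy distinct slots among the
top `T` entries of the `d` sequences, so there are at most `dT` of them. By the triplet condition,
the elements of multiplicity one that first appear below level `α - T` all sit in a single
sequence at levels `α - T + 1, …, α`, so there are at most `T` of them. By the singleton condition
every remaining element occurs only at levels in `(T, α - T]`.

Call two of these `n` band elements adjacent when they occur together among the first `α - T - 1`
entries of some sequence. The triplet condition makes the complement triangle-free, so Mantel's
theorem gives at least `n² / 4 - n / 2` edges; each edge is pinned down by a sequence and two of
its `c = α - 2T - 1` levels in `(T, α - T - 1]`, so there are at most `d c (c - 1) / 2` edges.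
Hence `n ≤ 1 + √(2d) (c - 1/2)`, and `K ≤ dT + T + n` rearranges to `3K (1 - √(2/d)) ≤ dα`.
-/

open Finset

namespace List

variable {β : Type*}

lemma mem_take_iff_getElem? {l : List β} {L : ℕ} {x : β} :
    x ∈ l.take L ↔ ∃ p < L, l[p]? = some x := by
  simp only [mem_take_iff_getElem, getElem?_eq_some_iff]
  constructor
  · rintro ⟨p, hp, rfl⟩
    exact ⟨p, by omega, by omega, rfl⟩
  · rintro ⟨p, hpL, hp, rfl⟩
    exact ⟨p, by omega, rfl⟩

lemma mem_take_of_getElem? {l : List β} {L p : ℕ} {x : β} (hp : p < L) (h : l[p]? = some x) :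
    x ∈ l.take L :=
  mem_take_iff_getElem?.2 ⟨p, hp, h⟩

lemma mem_take_or_getElem?_of_mem_take_add_one {l : List β} {m : ℕ} {x : β}
    (h : x ∈ l.take (m + 1)) : x ∈ l.take m ∨ l[m]? = some x := by
  rwa [take_add_one, mem_append, Option.mem_toList] at h

lemma two_le_count_of_getElem? [DecidableEq β] {l : List β} {x : β} {p q : ℕ} (hpq : p < q)
    (hp : l[p]? = some x) (hq : l[q]? = some x) : 2 ≤ l.count x := by
  have htake : 0 < (l.take q).count x := count_pos_iff.2 (mem_take_of_getElem? hpq hp)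
  have hdrop : 0 < (l.drop q).count x :=
    count_pos_iff.2 (mem_of_getElem? (i := 0) (by rwa [getElem?_drop, Nat.add_zero]))
  rw [← take_append_drop q l, count_append]
  omega

lemma eq_of_getElem?_of_count_le_one [DecidableEq β] {l : List β} {x : β} {p q : ℕ}
    (h : l.count x ≤ 1) (hp : l[p]? = some x) (hq : l[q]? = some x) : p = q := by
  by_contra hpq
  rcases Nat.lt_or_gt_of_ne hpq with hlt | hlt
  · exact absurd (two_le_count_of_getElem? hlt hp hq) (by omega)
  · exact absurd (two_le_count_of_getElem? hlt hq hp) (by omega)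

end List

lemma Fintype.exists_ne_and_ne {α : Type*} [Fintype α] [DecidableEq α] (h : 3 ≤ Fintype.card α)
    (a b : α) : ∃ c, c ≠ a ∧ c ≠ b := by
  have : #({a, b} : Finset α) < #(univ : Finset α) := by
    rw [card_univ]
    exact (card_le_two).trans_lt (by omega)
  obtain ⟨c, -, hc⟩ := exists_mem_notMem_of_card_lt_card this
  simp only [mem_insert, mem_singleton, not_or] at hc
  exact ⟨c, hc⟩

namespace SimpleGraph

variable {V : Type*} [Fintype V] [DecidableEq V]

lemma sq_card_le_of_cliqueFree_compl (G : SimpleGraph V) [DecidableRel G.Adj]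
    (h : Gᶜ.CliqueFree 3) :
    Fintype.card V ^ 2 ≤ 2 * Fintype.card V + 4 * #G.edgeFinset := by
  set n := Fintype.card V
  have hturan : #Gᶜ.edgeFinset ≤ (n ^ 2 - (n % 2) ^ 2) * (2 - 1) / (2 * 2) + (n % 2).choose 2 :=
    CliqueFree.card_edgeFinset_le (r := 2) h
  have hsplit : #G.edgeFinset + #Gᶜ.edgeFinset = n.choose 2 := by
    rw [← card_union_of_disjoint (disjoint_edgeFinset.2 disjoint_compl_right), ← edgeFinset_sup]
    convert card_edgeFinset_top_eq_card_choose_two (V := V) using 3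
    exact sup_compl_eq_top
  have hchoose : 2 * n.choose 2 = n * (n - 1) := by
    rw [Nat.choose_two_right, Nat.mul_div_cancel' (Nat.even_mul_pred_self n).two_dvd]
  have hsq : n ^ 2 = n * (n - 1) + n := by
    cases n <;> simp [sq, Nat.mul_succ, Nat.succ_mul]
  rcases Nat.mod_two_eq_zero_or_one n with hn | hn <;>
    · rw [hn] at hturan
      norm_num at hturan
      omega

end SimpleGraph

section Levels

variable {d K : ℕ} {s : Fin d → List (Fin K)} {x : Fin K} {i : Fin d} {p : ℕ}

lemma lMin_le_of_getElem? (h : (s i)[p]? = some x) : lMin s x ≤ p + 1 :=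
  Nat.sInf_le ⟨by omega, i, by simpa using h⟩

lemma lMin_le_of_mem_take_s13 {L : ℕ} (h : x ∈ (s i).take L) : lMin s x ≤ L := by
  obtain ⟨p, hp, hx⟩ := List.mem_take_iff_getElem?.1 h
  have := lMin_le_of_getElem? hx
  omega

lemma exists_getElem?_lMin (h : (s i)[p]? = some x) :
    ∃ j q, q + 1 = lMin s x ∧ (s j)[q]? = some x := by
  have hocc : OccursAt s x (p + 1) := ⟨by omega, i, by simpa using h⟩
  obtain ⟨hpos, j, hj⟩ : OccursAt s x (lMin s x) :=
    Nat.sInf_mem (s := {ℓ | OccursAt s x ℓ}) ⟨p + 1, hocc⟩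
  exact ⟨j, lMin s x - 1, by omega, hj⟩

lemma le_lMax_of_getElem? (h : (s i)[p]? = some x) : p + 1 ≤ lMax s x := by
  have hocc : OccursAt s x (p + 1) := ⟨by omega, i, by simpa using h⟩
  refine le_csSup ⟨univ.sup fun j => (s j).length, ?_⟩ hocc
  rintro ℓ ⟨-, j, hj⟩
  have := (List.getElem?_eq_some_iff.1 hj).1
  have := le_sup (f := fun j => (s j).length) (mem_univ j)
  omega

lemma lMax_le {n : ℕ} (h : ∀ i p, (s i)[p]? = some x → p + 1 ≤ n) : lMax s x ≤ n :=
  csSup_le' fun ℓ ⟨_, j, hj⟩ => by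
    have := h j (ℓ - 1) hj
    omega

lemma mem_take_of_lMax_le {n L : ℕ} (hmax : lMax s x ≤ n) (h : x ∈ (s i).take L) :
    x ∈ (s i).take n := by
  obtain ⟨p, -, hp⟩ := List.mem_take_iff_getElem?.1 h
  have := le_lMax_of_getElem? hp
  exact List.mem_take_of_getElem? (by omega) hp

lemma eq_of_totalCount_le_one (h : totalCount s x ≤ 1) {j : Fin d} {q : ℕ}
    (hp : (s i)[p]? = some x) (hq : (s j)[q]? = some x) : i = j ∧ p = q := by
  have hnonneg : ∀ k ∈ univ, 0 ≤ (s k).count x := fun _ _ => Nat.zero_le _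
  have hi := List.count_pos_iff.2 (List.mem_of_getElem? hp)
  obtain rfl : i = j := by
    by_contra hij
    have := add_le_sum hnonneg (mem_univ i) (mem_univ j) hij
    have := List.count_pos_iff.2 (List.mem_of_getElem? hq)
    unfold totalCount at h
    omega
  have : (s i).count x ≤ totalCount s x := single_le_sum hnonneg (mem_univ i)
  exact ⟨rfl, List.eq_of_getElem?_of_count_le_one (by omega) hp hq⟩

lemma lMax_le_lMin_of_totalCount_le_one (h : totalCount s x ≤ 1) : lMax s x ≤ lMin s x :=
  lMax_le fun _ _ hp => by
    obtain ⟨j, q, hq, hjq⟩ := exists_getElem?_lMin hp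
    obtain ⟨-, rfl⟩ := eq_of_totalCount_le_one h hp hjq
    omega

end Levels

lemma card_le_card_of_forall_exists_getElem? {β : Type*} {d : ℕ} (s : Fin d → List β)
    {A : Finset β} {P : Finset (Fin d × ℕ)} (h : ∀ x ∈ A, ∃ q ∈ P, (s q.1)[q.2]? = some x) :
    #A ≤ #P := by
  classical
  calc #A = #(A.image some) := (card_image_of_injective _ (Option.some_injective _)).symm
    _ ≤ #(P.image fun q => (s q.1)[q.2]?) := card_le_card fun y hy => by
        obtain ⟨x, hx, rfl⟩ := mem_image.1 hy
        obtain ⟨q, hq, hqx⟩ := h x hx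
        exact mem_image.2 ⟨q, hq, hqx⟩
    _ ≤ #P := card_image_le

lemma card_filter_lMin_le {d K : ℕ} {s : Fin d → List (Fin K)}
    (hocc : ∀ x, ∃ (i : Fin d) (p : ℕ), (s i)[p]? = some x) (T : ℕ) :
    #{x | lMin s x ≤ T} ≤ d * T := by
  calc #{x | lMin s x ≤ T}
      ≤ #(univ ×ˢ range T) := card_le_card_of_forall_exists_getElem? s fun x hx => by
        obtain ⟨i, p, hp⟩ := hocc x
        obtain ⟨j, q, hq, hjq⟩ := exists_getElem?_lMin hp
        simp only [mem_filter, mem_univ, true_and] at hx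
        exact ⟨(j, q), by simp only [mem_product, mem_univ, mem_range, true_and]; omega, hjq⟩
    _ = d * T := by simp

def cooccurGraph {β : Type*} {d : ℕ} (s : Fin d → List β) (m : ℕ) : SimpleGraph β where
  Adj x y := x ≠ y ∧ ∃ i, x ∈ (s i).take m ∧ y ∈ (s i).take m
  symm := ⟨fun _ _ ⟨hxy, i, hx, hy⟩ => ⟨hxy.symm, i, hy, hx⟩⟩
  loopless := ⟨fun _ h => h.1 rfl⟩

lemma two_mul_card_edgeFinset_induce_cooccurGraph_le {β : Type*} [DecidableEq β] {d : ℕ}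
    (s : Fin d → List β) {A : Finset β} {T m : ℕ}
    [DecidableRel ((cooccurGraph s m).induce (A : Set β)).Adj]
    (hA : ∀ x ∈ A, ∀ i, x ∉ (s i).take T) :
    2 * #((cooccurGraph s m).induce (A : Set β)).edgeFinset ≤
      d * ((m - T) * (m - T) - (m - T)) := by
  rw [← SimpleGraph.dart_card_eq_twice_card_edges, ← card_univ]
  set G := (cooccurGraph s m).induce (A : Set β)
  have hpos : ∀ D : G.Dart, ∃ i p q, (T ≤ p ∧ p < m) ∧ (T ≤ q ∧ q < m) ∧
      (s i)[p]? = some D.fst.1 ∧ (s i)[q]? = some D.snd.1 := by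
    intro D
    obtain ⟨-, i, hx, hy⟩ : (cooccurGraph s m).Adj D.fst.1 D.snd.1 := D.adj
    obtain ⟨p, hpm, hp⟩ := List.mem_take_iff_getElem?.1 hx
    obtain ⟨q, hqm, hq⟩ := List.mem_take_iff_getElem?.1 hy
    have hTp : T ≤ p := not_lt.1 fun h => hA _ D.fst.2 i (List.mem_take_of_getElem? h hp)
    have hTq : T ≤ q := not_lt.1 fun h => hA _ D.snd.2 i (List.mem_take_of_getElem? h hq)
    exact ⟨i, p, q, ⟨hTp, hpm⟩, ⟨hTq, hqm⟩, hp, hq⟩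
  choose i p q hp hq hpx hqy using hpos
  refine (card_le_card_of_injOn (t := univ ×ˢ (range (m - T)).offDiag)
    (fun D => (i D, p D - T, q D - T)) (fun D _ => ?_) fun D _ D' _ hDD' => ?_).trans ?_
  · have hne : p D ≠ q D := fun h => G.ne_of_adj D.adj <| Subtype.ext <|
      Option.some.inj <| (hpx D).symm.trans <| h ▸ hqy D
    have := hp D
    have := hq D
    simp only [coe_product, coe_univ, Set.mem_prod, Set.mem_univ, coe_offDiag, coe_range,
      Set.mem_offDiag, Set.mem_Iio, true_and]
    omega
  · simp only [Prod.mk.injEq] at hDD'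
    obtain ⟨hi, hp', hq'⟩ := hDD'
    have e1 : p D = p D' := by have := hp D; have := hp D'; omega
    have e2 : q D = q D' := by have := hq D; have := hq D'; omega
    refine SimpleGraph.Dart.ext _ _ (Prod.ext (Subtype.ext ?_) (Subtype.ext ?_))
    · exact Option.some.inj ((hpx D).symm.trans (hi ▸ e1 ▸ hpx D'))
    · exact Option.some.inj ((hqy D).symm.trans (hi ▸ e2 ▸ hqy D'))
  · simp [offDiag_card]

section CooccurGraph

variable {β : Type*} {d m : ℕ} {s : Fin d → List β} {i : Fin d} {x y z : β}

lemma cooccurGraph_adj_of_mem_take {L : ℕ} (hxy : x ≠ y) (hL : L ≤ m) (hx : x ∈ (s i).take L)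
    (hy : y ∈ (s i).take L) : (cooccurGraph s m).Adj x y :=
  ⟨hxy, i, List.take_subset_take_left _ hL hx, List.take_subset_take_left _ hL hy⟩

lemma cooccurGraph_adj_of_mem_take_add_one (hxy : x ≠ y) (hxz : x ≠ z) (hyz : y ≠ z)
    (hx : x ∈ (s i).take (m + 1)) (hy : y ∈ (s i).take (m + 1)) (hz : z ∈ (s i).take (m + 1)) :
    (cooccurGraph s m).Adj x y ∨ (cooccurGraph s m).Adj x z ∨ (cooccurGraph s m).Adj y z := by
  rcases List.mem_take_or_getElem?_of_mem_take_add_one hx with hx | hx <;>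
    rcases List.mem_take_or_getElem?_of_mem_take_add_one hy with hy | hy <;>
    rcases List.mem_take_or_getElem?_of_mem_take_add_one hz with hz | hz <;>
    first
    | exact Or.inl ⟨hxy, i, hx, hy⟩
    | exact Or.inr (Or.inl ⟨hxz, i, hx, hz⟩)
    | exact Or.inr (Or.inr ⟨hyz, i, hy, hz⟩)
    | exact (hxy (Option.some.inj (hx.symm.trans hy))).elim
    | exact (hxz (Option.some.inj (hx.symm.trans hz))).elim
    | exact (hyz (Option.some.inj (hy.symm.trans hz))).elim

end CooccurGraph

noncomputable def levelBand {d K : ℕ} (s : Fin d → List (Fin K)) (a b : ℕ) : Finset (Fin K) :=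
  {x | a < lMin s x ∧ lMax s x ≤ b}

namespace TripletCond

variable {d K α : ℕ} {s : Fin d → List (Fin K)}

lemma three_le (htrip : TripletCond d K α s) (hK : 3 ≤ K) : 3 ≤ α := by
  have hK' : 3 ≤ Fintype.card (Fin K) := by simpa using hK
  obtain ⟨a⟩ : Nonempty (Fin K) := ⟨⟨0, by omega⟩⟩
  obtain ⟨b, hba, -⟩ := Fintype.exists_ne_and_ne hK' a a
  obtain ⟨c, hca, hcb⟩ := Fintype.exists_ne_and_ne hK' a b
  obtain ⟨i, i', i'', ℓ, ℓ', ℓ'', hsum, hcov⟩ := htrip a b c hba.symm hca.symm hcb.symm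
  have hsub : ({a, b, c} : Finset (Fin K)) ⊆
      ((s i).take ℓ).toFinset ∪ ((s i').take ℓ').toFinset ∪ ((s i'').take ℓ'').toFinset := by
    intro x hx
    simp only [mem_insert, mem_singleton] at hx
    simpa [or_assoc] using hcov x hx
  have hlen (j : Fin d) (L : ℕ) : #((s j).take L).toFinset ≤ L :=
    (List.toFinset_card_le _).trans (List.length_take_le _ _)
  calc 3 = #({a, b, c} : Finset (Fin K)) :=
        (card_eq_three.2 ⟨a, b, c, hba.symm, hca.symm, hcb.symm, rfl⟩).symm
    _ ≤ #((s i).take ℓ).toFinset + #((s i').take ℓ').toFinset + #((s i'').take ℓ'').toFinset :=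
        (card_le_card hsub).trans <|
          (card_union_le _ _).trans (Nat.add_le_add_right (card_union_le _ _) _)
    _ ≤ α := by grw [hlen, hlen, hlen]; exact hsum

lemma exists_getElem?_lt (htrip : TripletCond d K α s) (hK : 3 ≤ K) (x : Fin K) :
    ∃ i p, p < α ∧ (s i)[p]? = some x := by
  have hK' : 3 ≤ Fintype.card (Fin K) := by simpa using hK
  obtain ⟨u, hux, -⟩ := Fintype.exists_ne_and_ne hK' x x
  obtain ⟨v, hvx, hvu⟩ := Fintype.exists_ne_and_ne hK' x u
  obtain ⟨i, i', i'', ℓ, ℓ', ℓ'', hsum, hcov⟩ := htrip x u v hux.symm hvx.symm hvu.symm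
  have hprefix (j : Fin d) (L : ℕ) (hL : L ≤ α) (h : x ∈ (s j).take L) :
      ∃ i p, p < α ∧ (s i)[p]? = some x := by
    obtain ⟨p, hp, hx⟩ := List.mem_take_iff_getElem?.1 h
    exact ⟨j, p, by omega, hx⟩
  rcases hcov x (Or.inl rfl) with h | h | h
  exacts [hprefix _ _ (by omega) h, hprefix _ _ (by omega) h, hprefix _ _ (by omega) h]

lemma exists_mem_take_of_lt_lMin_add (htrip : TripletCond d K α s) (hK : 3 ≤ K) {u v : Fin K}
    (huv : u ≠ v) (h : α < lMin s u + lMin s v) :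
    ∃ i L, L ≤ α ∧ u ∈ (s i).take L ∧ v ∈ (s i).take L := by
  obtain ⟨w, hwu, hwv⟩ := Fintype.exists_ne_and_ne (by simpa using hK) u v
  obtain ⟨i, i', i'', ℓ, ℓ', ℓ'', hsum, hcov⟩ := htrip u v w huv hwu.symm hwv.symm
  rcases hcov u (Or.inl rfl) with hu | hu | hu <;>
    rcases hcov v (Or.inr (Or.inl rfl)) with hv | hv | hv <;>
    first
    | exact ⟨_, _, by omega, hu, hv⟩
    | (have := lMin_le_of_mem_take_s13 hu; have := lMin_le_of_mem_take_s13 hv; omega)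

/-- By the triplet condition these elements all lie in one sequence, at the `T` positions
`α - T, …, α - 1`. -/
lemma card_filter_totalCount_le_one_le (htrip : TripletCond d K α s) (hK : 3 ≤ K) {T : ℕ}
    (hT : 2 * T ≤ α) : #{x | totalCount s x ≤ 1 ∧ α - T < lMin s x} ≤ T := by
  rcases eq_empty_or_nonempty ({x | totalCount s x ≤ 1 ∧ α - T < lMin s x} : Finset (Fin K))
    with hU | ⟨u, hu⟩
  · simp [hU]
  simp only [mem_filter, mem_univ, true_and] at hu
  obtain ⟨i, p, hpα, hp⟩ := htrip.exists_getElem?_lt hK u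
  calc #{x | totalCount s x ≤ 1 ∧ α - T < lMin s x}
      ≤ #({i} ×ˢ Ico (α - T) α) := card_le_card_of_forall_exists_getElem? s fun v hv => by
        simp only [mem_filter, mem_univ, true_and] at hv
        by_cases hvu : v = u
        · subst hvu
          have := lMin_le_of_getElem? hp
          exact ⟨(i, p), by simp only [mem_product, mem_singleton, mem_Ico, true_and]; omega, hp⟩
        obtain ⟨j, L, hL, huj, hvj⟩ :=
          htrip.exists_mem_take_of_lt_lMin_add hK (Ne.symm hvu) (by omega)
        obtain ⟨p', -, hp'⟩ := List.mem_take_iff_getElem?.1 huj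
        obtain ⟨rfl, -⟩ := eq_of_totalCount_le_one hu.1 hp hp'
        obtain ⟨q, hqL, hq⟩ := List.mem_take_iff_getElem?.1 hvj
        have := lMin_le_of_getElem? hq
        exact ⟨(i, q), by simp only [mem_product, mem_singleton, mem_Ico, true_and]; omega, hq⟩
    _ = T := by simp only [card_product, card_singleton, Nat.card_Ico]; omega

/-- A cover of three band elements by prefixes of total length `≤ α` puts two of them in one prefix
of length `≤ α - T - 1`, because every band element needs a prefix longer than `T`. -/
lemma cooccurGraph_adj_of_mem_levelBand (htrip : TripletCond d K α s) {T : ℕ}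
    (hα : α < 3 * T + 3) {x y z : Fin K} (hxy : x ≠ y) (hxz : x ≠ z) (hyz : y ≠ z)
    (hx : x ∈ levelBand s T (α - T)) (hy : y ∈ levelBand s T (α - T))
    (hz : z ∈ levelBand s T (α - T)) :
    (cooccurGraph s (α - T - 1)).Adj x y ∨ (cooccurGraph s (α - T - 1)).Adj x z ∨
      (cooccurGraph s (α - T - 1)).Adj y z := by
  simp only [levelBand, mem_filter, mem_univ, true_and] at hx hy hz
  have two {a b c : Fin K} {j j' : Fin d} {L L' : ℕ} (hc : T < lMin s c) (hab : a ≠ b)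
      (ha : a ∈ (s j).take L) (hb : b ∈ (s j).take L) (hc' : c ∈ (s j').take L')
      (hLL' : L + L' ≤ α) : (cooccurGraph s (α - T - 1)).Adj a b := by
    have := lMin_le_of_mem_take_s13 hc'
    exact cooccurGraph_adj_of_mem_take hab (by omega) ha hb
  have three {j : Fin d} {L : ℕ} (hx' : x ∈ (s j).take L) (hy' : y ∈ (s j).take L)
      (hz' : z ∈ (s j).take L) : (cooccurGraph s (α - T - 1)).Adj x y ∨
        (cooccurGraph s (α - T - 1)).Adj x z ∨ (cooccurGraph s (α - T - 1)).Adj y z := by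
    obtain ⟨p, -, hp⟩ := List.mem_take_iff_getElem?.1 hx'
    have := le_lMax_of_getElem? hp
    have hαT : α - T - 1 + 1 = α - T := by omega
    refine cooccurGraph_adj_of_mem_take_add_one (i := j) hxy hxz hyz ?_ ?_ ?_ <;> rw [hαT]
    exacts [mem_take_of_lMax_le hx.2 hx', mem_take_of_lMax_le hy.2 hy',
      mem_take_of_lMax_le hz.2 hz']
  obtain ⟨i, i', i'', ℓ, ℓ', ℓ'', hsum, hcov⟩ := htrip x y z hxy hxz hyz
  rcases hcov x (Or.inl rfl) with h₁ | h₁ | h₁ <;>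
    rcases hcov y (Or.inr (Or.inl rfl)) with h₂ | h₂ | h₂ <;>
    rcases hcov z (Or.inr (Or.inr rfl)) with h₃ | h₃ | h₃ <;>
    first
    | exact three h₁ h₂ h₃
    | exact Or.inl (two hz.1 hxy h₁ h₂ h₃ (by omega))
    | exact Or.inr (Or.inl (two hy.1 hxz h₁ h₃ h₂ (by omega)))
    | exact Or.inr (Or.inr (two hx.1 hyz h₂ h₃ h₁ (by omega)))
    | (have := lMin_le_of_mem_take_s13 h₁; have := lMin_le_of_mem_take_s13 h₂
       have := lMin_le_of_mem_take_s13 h₃; omega)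

lemma cliqueFree_compl_induce_levelBand (htrip : TripletCond d K α s) {T : ℕ}
    (hα : α < 3 * T + 3) :
    ((cooccurGraph s (α - T - 1)).induce (levelBand s T (α - T) : Set (Fin K)))ᶜ.CliqueFree 3 := by
  intro t ht
  obtain ⟨a, b, c, hab, hac, hbc, -⟩ := SimpleGraph.is3Clique_iff.1 ht
  rw [SimpleGraph.compl_adj] at hab hac hbc
  rcases htrip.cooccurGraph_adj_of_mem_levelBand hα (fun h => hab.1 (Subtype.ext h))
    (fun h => hac.1 (Subtype.ext h)) (fun h => hbc.1 (Subtype.ext h)) a.2 b.2 c.2 with h | h | h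
  exacts [hab.2 h, hac.2 h, hbc.2 h]

lemma sq_card_levelBand_le (htrip : TripletCond d K α s) {T : ℕ} (hα : α < 3 * T + 3) :
    #(levelBand s T (α - T)) ^ 2 ≤ 2 * #(levelBand s T (α - T)) +
      2 * (d * ((α - T - 1 - T) * (α - T - 1 - T) - (α - T - 1 - T))) := by
  classical
  have hmantel := SimpleGraph.sq_card_le_of_cliqueFree_compl _
    (htrip.cliqueFree_compl_induce_levelBand hα)
  have hedges := two_mul_card_edgeFinset_induce_cooccurGraph_le s (A := levelBand s T (α - T))
    (T := T) (m := α - T - 1) fun x hx i h => by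
      have := lMin_le_of_mem_take_s13 h
      simp only [levelBand, mem_filter, mem_univ, true_and] at hx
      omega
  simp only [coe_sort_coe, Fintype.card_coe] at hmantel
  omega

end TripletCond

lemma IsPCD.card_le {d K α : ℕ} {s : Fin d → List (Fin K)} (h : IsPCD d K α s) (hK : 3 ≤ K)
    {T : ℕ} (hT : 2 * T ≤ α) : K ≤ d * T + T + #(levelBand s T (α - T)) := by
  set S : Finset (Fin K) := {x | lMin s x ≤ T}
  set U : Finset (Fin K) := {x | totalCount s x ≤ 1 ∧ α - T < lMin s x}
  have hcover : (univ : Finset (Fin K)) ⊆ S ∪ U ∪ levelBand s T (α - T) := by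
    intro x _
    simp only [S, U, levelBand, mem_union, mem_filter, mem_univ, true_and]
    by_cases hcount : totalCount s x ≤ 1
    · have := lMax_le_lMin_of_totalCount_le_one hcount
      omega
    · have := h.2 x (by omega)
      omega
  have hocc (x : Fin K) : ∃ (i : Fin d) (p : ℕ), (s i)[p]? = some x :=
    let ⟨i, p, _, hp⟩ := h.1.exists_getElem?_lt hK x
    ⟨i, p, hp⟩
  have := card_le_card hcover
  have := card_union_le (S ∪ U) (levelBand s T (α - T))
  have := card_union_le S U
  have : #S ≤ d * T := card_filter_lMin_le hocc T
  have : #U ≤ T := h.1.card_filter_totalCount_le_one_le hK hT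
  simp only [card_univ, Fintype.card_fin] at *
  omega

lemma sub_one_le_sqrt_mul_of_sq_le {n c d : ℝ} (hd : 2 ≤ d) (hc : 1 ≤ c)
    (h : n ^ 2 ≤ 2 * n + 2 * d * (c * (c - 1))) : n - 1 ≤ √(2 * d) * (c - 1 / 2) := by
  have hy : √(2 * d) ^ 2 = 2 * d := Real.sq_sqrt (by linarith)
  have hrhs : 0 ≤ √(2 * d) * (c - 1 / 2) := mul_nonneg (Real.sqrt_nonneg _) (by linarith)
  refine le_of_abs_le (abs_le_of_sq_le_sq ?_ hrhs)
  rw [mul_pow, hy]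
  nlinarith

lemma three_mul_add_le {d α T n : ℕ} (hd : 3 ≤ d) (hT : 1 ≤ T) (hTα : 3 * T ≤ α)
    (hαT : α < 3 * T + 3)
    (hn : n ^ 2 ≤ 2 * n + 2 * (d * ((α - T - 1 - T) * (α - T - 1 - T) - (α - T - 1 - T)))) :
    3 * ((T : ℝ) + n) ≤ (√(2 * d) + 2) * α := by
  have hd' : (3 : ℝ) ≤ d := by exact_mod_cast hd
  have hy : √(2 * d) ^ 2 = 2 * d := Real.sq_sqrt (by linarith)
  have hy0 := Real.sqrt_nonneg (2 * (d : ℝ))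
  obtain hc | hc := Nat.eq_zero_or_pos (α - T - 1 - T)
  · obtain ⟨rfl, rfl⟩ : T = 1 ∧ α = 3 := by omega
    rw [hc] at hn
    have : n ≤ 2 := by nlinarith
    have : (n : ℝ) ≤ 2 := by exact_mod_cast this
    push_cast
    nlinarith
  · set c := α - T - 1 - T
    have hcα : (c : ℝ) + 2 * T + 1 = α := by exact_mod_cast (by omega : c + 2 * T + 1 = α)
    have hnR : (n : ℝ) ^ 2 ≤ 2 * n + 2 * d * (c * (c - 1)) := by
      have : ((c * c - c : ℕ) : ℝ) = c * (c - 1) := by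
        rw [Nat.cast_sub (Nat.le_mul_self c)]
        push_cast
        ring
      rw [mul_assoc, ← this]
      exact_mod_cast hn
    have := sub_one_le_sqrt_mul_of_sq_le (by linarith) (by exact_mod_cast hc) hnR
    have hα' : (α : ℝ) ≤ 3 * T + 2 := by exact_mod_cast (by omega : α ≤ 3 * T + 2)
    have hT' : (1 : ℝ) ≤ T := by exact_mod_cast hT
    nlinarith

lemma natCast_mul_three_mul_one_sub_sqrt_le {d K α T n : ℕ} (hd : 3 ≤ d) (hTα : 3 * T ≤ α)
    (hK : K ≤ d * T + T + n) (h : 3 * ((T : ℝ) + n) ≤ (√(2 * d) + 2) * α) :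
    (K : ℝ) * (3 * (1 - √(2 / d))) ≤ d * α := by
  have hd0 : (0 : ℝ) < d := by exact_mod_cast (by omega : 0 < d)
  have hd3 : (3 : ℝ) ≤ d := by exact_mod_cast hd
  set x := √(2 / d)
  have hx0 : 0 ≤ x := Real.sqrt_nonneg _
  have hx2 : d * x ^ 2 = 2 := by
    rw [Real.sq_sqrt (by positivity)]
    field_simp
  have hx1 : x ≤ 1 := by nlinarith
  have hdx : √(2 * d) = d * x := by
    rw [show (2 : ℝ) * d = d ^ 2 * (2 / d) by field_simp, Real.sqrt_mul (sq_nonneg _),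
      Real.sqrt_sq hd0.le]
  have hKR : (K : ℝ) ≤ d * T + T + n := by exact_mod_cast hK
  have hTR : 3 * (T : ℝ) ≤ α := by exact_mod_cast hTα
  rw [hdx] at h
  calc (K : ℝ) * (3 * (1 - x))
      ≤ (d * T + T + n) * (3 * (1 - x)) := by gcongr
    _ = d * (3 * T) * (1 - x) + 3 * (T + n) * (1 - x) := by ring
    _ ≤ d * α * (1 - x) + (d * x + 2) * α * (1 - x) := by gcongr
    _ = d * α - 2 * x * α := by linear_combination (-(α : ℝ)) * hx2
    _ ≤ d * α := by nlinarith

theorem stmt_13 (d : ℕ) (hd : 3 ≤ d) :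
    ∀ r ∈ gammaSet d, r ≤ (d : ℝ) / (3 * (1 - Real.sqrt (2 / (d : ℝ)))) := by
  rintro _ ⟨K, α, s, hK, hα, hpcd, rfl⟩
  have hx : √(2 / (d : ℝ)) < 1 := by
    rw [Real.sqrt_lt' one_pos, one_pow, div_lt_one (by positivity)]
    exact_mod_cast (by omega : 2 < d)
  rw [div_le_div_iff₀ (by exact_mod_cast hα) (by linarith)]
  have := hpcd.1.three_le (by omega)
  exact natCast_mul_three_mul_one_sub_sqrt_le hd (T := α / 3) (by omega)
    (hpcd.card_le (by omega) (by omega))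
    (three_mul_add_le hd (by omega) (by omega) (by omega) (hpcd.1.sq_card_levelBand_le (by omega)))
end
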